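/- arXiv:2408.08439 — 2 statements merged into one kernel-verified Lean document; each statement's English description precedes it below -/
import Mathlib

section
/- If a vertex ordering π of K_{b,n−b} achieves mLogGapA(K_{b,n−b}, π) = 1, then π places the b center vertices on consecutive indices (assuming b ≥ 2 and n − b ≥ 2). -/
open Finset
open scoped Classical

/-- Sum of `log₂(1 + gap)` over consecutive gaps of a (sorted) list of indices. -/
noncomputable def gapTotal (l : List ℕ) : ℝ :=
  ((l.zip l.tail).map (fun p => Real.logb 2 (1 + ((p.2 - p.1 : ℕ) : ℝ)))).sum

/-- The contribution of vertex `v` to `m * mLogGapA`: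
`1 + Σ_{i=2}^{d(v)} log₂(1 + π(u_i) - π(u_{i-1}))` with neighbors sorted by `π`. -/
noncomputable def vertexGap {V : Type*} [Fintype V] (G : SimpleGraph V) (π : V → ℕ) (v : V) : ℝ :=
  1 + gapTotal (((G.neighborFinset v).image π).sort (· ≤ ·))

/-- `mLogGapA(G, π)`, the average gap measure. -/
noncomputable def mLogGapA {V : Type*} [Fintype V] (G : SimpleGraph V) (π : V → ℕ) : ℝ :=
  (∑ v : V, vertexGap G π v) / (2 * (G.edgeFinset.card : ℝ))

/-- `mLogA(G, π)`, the average neighbor distance measure. -/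
noncomputable def mLogA {V : Type*} [Fintype V] (G : SimpleGraph V) (π : V → ℕ) : ℝ :=
  (∑ v : V, ∑ u ∈ G.neighborFinset v, Real.logb 2 (1 + |(π u : ℝ) - (π v : ℝ)|)) /
    (2 * (G.edgeFinset.card : ℝ))

/-!
Distinct indices differ by at least `1`, so every gap term `log₂ (1 + gap)` is at least `1` and
each vertex contributes at least its degree; summing, `m · mLogGapA ≥ Σ d(v) = m`. Hence
`mLogGapA = 1` forces every gap of every adjacency list to equal `1`. A peripheral vertex of
`K_{b,n−b}` is adjacent to exactly the center, so the center occupies consecutive indices.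
-/

lemma gapTotal_cons_cons (a c : ℕ) (t : List ℕ) :
    gapTotal (a :: c :: t) = Real.logb 2 (1 + ((c - a : ℕ) : ℝ)) + gapTotal (c :: t) := by
  simp [gapTotal]

lemma one_le_logb_two_one_add_iff (g : ℕ) : 1 ≤ Real.logb 2 (1 + (g : ℝ)) ↔ 1 ≤ g := by
  rw [Real.le_logb_iff_rpow_le one_lt_two (by positivity), Real.rpow_one,
    ← Nat.one_le_cast (α := ℝ)]
  constructor <;> intro <;> linarith

lemma logb_two_one_add_le_one_iff (g : ℕ) : Real.logb 2 (1 + (g : ℝ)) ≤ 1 ↔ g ≤ 1 := by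
  rw [Real.logb_le_iff_le_rpow one_lt_two (by positivity), Real.rpow_one,
    ← Nat.cast_le_one (α := ℝ)]
  constructor <;> intro <;> linarith

lemma length_le_gapTotal {a : ℕ} {t : List ℕ} (h : (a :: t).IsChain (· < ·)) :
    (t.length : ℝ) ≤ gapTotal (a :: t) := by
  induction t generalizing a with
  | nil => simp [gapTotal]
  | cons c t ih =>
    obtain ⟨hac, hchain⟩ := List.isChain_cons_cons.mp h
    have hgap := (one_le_logb_two_one_add_iff (c - a)).mpr (by omega)
    rw [gapTotal_cons_cons, List.length_cons, Nat.cast_succ]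
    linarith [ih hchain]

lemma eq_range'_of_gapTotal_eq_length {a : ℕ} {t : List ℕ} (h : (a :: t).IsChain (· < ·))
    (he : gapTotal (a :: t) = t.length) : a :: t = List.range' a (t.length + 1) := by
  induction t generalizing a with
  | nil => rfl
  | cons c t ih =>
    obtain ⟨hac, hchain⟩ := List.isChain_cons_cons.mp h
    have hgap := (one_le_logb_two_one_add_iff (c - a)).mpr (by omega)
    have hrest := length_le_gapTotal hchain
    rw [gapTotal_cons_cons, List.length_cons, Nat.cast_succ] at he
    have hc : c = a + 1 := by
      have := (logb_two_one_add_le_one_iff (c - a)).mp (by linarith)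
      omega
    subst hc
    rw [List.length_cons, List.range'_succ, ih hchain (by linarith)]

lemma card_le_one_add_gapTotal_sort (s : Finset ℕ) :
    (s.card : ℝ) ≤ 1 + gapTotal (s.sort (· ≤ ·)) := by
  have hchain := (s.sortedLT_sort).isChain
  rw [← Finset.length_sort (· ≤ ·)]
  rcases hl : s.sort (· ≤ ·) with _ | ⟨a, t⟩
  · simp [gapTotal]
  · rw [hl] at hchain
    rw [List.length_cons, Nat.cast_succ]
    linarith [length_le_gapTotal hchain]

lemma exists_eq_Ico_of_one_add_gapTotal_sort_eq_card {s : Finset ℕ}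
    (h : 1 + gapTotal (s.sort (· ≤ ·)) = s.card) : ∃ k, s = Finset.Ico k (k + s.card) := by
  have hchain := (s.sortedLT_sort).isChain
  rw [← Finset.length_sort (· ≤ ·)] at h ⊢
  rcases hl : s.sort (· ≤ ·) with _ | ⟨a, t⟩
  · simp [hl, gapTotal] at h
  · rw [hl] at hchain h
    rw [List.length_cons, Nat.cast_succ] at h
    have hrange := eq_range'_of_gapTotal_eq_length hchain (by linarith)
    refine ⟨a, Finset.ext fun x => ?_⟩
    rw [← Finset.mem_sort (· ≤ ·), hl, hrange, List.mem_range'_1, Finset.mem_Ico,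
      List.length_range']

section

variable {V : Type*} [Fintype V] {G : SimpleGraph V} {π : V → ℕ}

lemma degree_le_vertexGap (hπ : Function.Injective π) (v : V) :
    (G.degree v : ℝ) ≤ vertexGap G π v := by
  have := card_le_one_add_gapTotal_sort ((G.neighborFinset v).image π)
  rwa [Finset.card_image_of_injective _ hπ, SimpleGraph.card_neighborFinset_eq_degree] at this

lemma vertexGap_eq_degree_of_mLogGapA_eq_one (hπ : Function.Injective π)
    (h : mLogGapA G π = 1) (v : V) : vertexGap G π v = G.degree v := by
  have hsum : ∑ v, vertexGap G π v = ∑ v, (G.degree v : ℝ) := by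
    have hE : (2 * (G.edgeFinset.card : ℝ)) ≠ 0 := by
      rintro hE
      simp [mLogGapA, hE] at h
    rw [mLogGapA, div_eq_one_iff_eq hE] at h
    rw [h]
    exact_mod_cast (G.sum_degrees_eq_twice_card_edges).symm
  exact ((Finset.sum_eq_sum_iff_of_le fun v _ => degree_le_vertexGap hπ v).mp
    hsum.symm v (Finset.mem_univ v)).symm

end

theorem stmt4_general (n b : ℕ) (hnb : 2 ≤ n - b)
    (π : (Fin b ⊕ Fin (n - b)) ≃ Fin n)
    (h : mLogGapA (completeBipartiteGraph (Fin b) (Fin (n - b))) (fun v => (π v : ℕ)) = 1) :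
    ∃ k, (Finset.univ.image fun i : Fin b => (π (Sum.inl i) : ℕ)) = Finset.Ico k (k + b) := by
  set G := completeBipartiteGraph (Fin b) (Fin (n - b))
  have hπ : Function.Injective fun v => (π v : ℕ) := Fin.val_injective.comp π.injective
  let p : Fin b ⊕ Fin (n - b) := Sum.inr ⟨0, by omega⟩
  have hneighbors : G.neighborFinset p = Finset.univ.image Sum.inl := by
    ext u
    cases u <;> simp [G, p]
  have hcenter : (G.neighborFinset p).image (fun v => (π v : ℕ))
      = Finset.univ.image fun i : Fin b => (π (Sum.inl i) : ℕ) := by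
    rw [hneighbors, Finset.image_image]
    rfl
  have hcard : (Finset.univ.image fun i : Fin b => (π (Sum.inl i) : ℕ)).card = b := by
    rw [Finset.card_image_of_injective _ fun i j hij => Sum.inl_injective (hπ hij),
      Finset.card_univ, Fintype.card_fin]
  have hgap := vertexGap_eq_degree_of_mLogGapA_eq_one hπ h p
  rw [vertexGap, ← SimpleGraph.card_neighborFinset_eq_degree,
    ← Finset.card_image_of_injective _ hπ, hcenter] at hgap
  simpa only [hcard] using exists_eq_Ico_of_one_add_gapTotal_sort_eq_card hgap

theorem stmt4 (n b : ℕ) (hb : 2 ≤ b) (hnb : 2 ≤ n - b)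
    (π : (Fin b ⊕ Fin (n - b)) ≃ Fin n)
    (h : mLogGapA (completeBipartiteGraph (Fin b) (Fin (n - b))) (fun v => (π v : ℕ)) = 1) :
    ∃ k, (Finset.univ.image fun i : Fin b => (π (Sum.inl i) : ℕ)) = Finset.Ico k (k + b) :=
  stmt4_general n b hnb π h
end

section
/- For the non-circulant band graph B(n, b) (i adjacent to j iff 1 ≤ |i − j| ≤ b, n > 2b), the identity ordering minimizes mLogA over all orderings: mLogA(B(n,b), id) ≤ mLogA(B(n,b), π) for every permutation π. -/
/-
Every permutation `π` maps the ordered adjacent pairs of `B(n, b)`, which are exactly the ordered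
pairs of distinct vertices at distance at most `b`, bijectively onto a set of as many ordered pairs
of distinct vertices. Exchanging the pairs of that image lying outside the band (distance `> b`)
for the band pairs it misses (distance `≤ b`) can only decrease a sum of a monotone function of
the distance, so the identity ordering minimises the numerator of `mLogA`; the denominators agree.
-/

open Finset
open scoped Classical

/-- the non-circulant band graph `B(n, b)`: `i ~ j` iff `1 ≤ |i - j| ≤ b`. -/
def bandGraph (n b : ℕ) : SimpleGraph (Fin n) :=
  SimpleGraph.fromRel
    (fun i j => 1 ≤ ((i : ℤ) - (j : ℤ)).natAbs ∧ ((i : ℤ) - (j : ℤ)).natAbs ≤ b)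

namespace Finset

variable {ι M : Type*} [AddCommMonoid M] [PartialOrder M] [IsOrderedCancelAddMonoid M]
  [DecidableEq ι]

theorem sum_le_sum_of_card_eq_of_threshold {s t : Finset ι} {f : ι → M} (c : M)
    (hcard : #s = #t) (hs : ∀ i ∈ s \ t, f i ≤ c) (ht : ∀ i ∈ t \ s, c ≤ f i) :
    ∑ i ∈ s, f i ≤ ∑ i ∈ t, f i := by
  rw [← sum_sdiff_le_sum_sdiff]
  calc ∑ i ∈ s \ t, f i ≤ #(s \ t) • c := sum_le_card_nsmul _ _ _ hs
    _ = #(t \ s) • c := by rw [card_sdiff_comm hcard]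
    _ ≤ ∑ i ∈ t \ s, f i := card_nsmul_le_sum _ _ _ ht

end Finset

theorem SimpleGraph.sum_sum_neighborFinset_eq_sum_adj {V M : Type*} [Fintype V] [AddCommMonoid M]
    (G : SimpleGraph V) (F : V → V → M) :
    ∑ v, ∑ u ∈ G.neighborFinset v, F u v = ∑ p : V × V with G.Adj p.1 p.2, F p.2 p.1 := by
  rw [sum_filter, Fintype.sum_prod_type]
  refine sum_congr rfl fun v _ => ?_
  rw [← sum_filter]
  congr 1
  ext u
  simp

theorem bandGraph_adj_iff {n b : ℕ} {i j : Fin n} :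
    (bandGraph n b).Adj i j ↔ i ≠ j ∧ |(i : ℝ) - j| ≤ b := by
  have hdist : |(i : ℝ) - j| = (((i : ℤ) - j).natAbs : ℝ) := by
    rw [Nat.cast_natAbs]; push_cast; rfl
  rw [bandGraph, SimpleGraph.fromRel_adj, hdist, Nat.cast_le, Ne, ← Fin.val_inj]
  omega

theorem stmt13_general (n b : ℕ) (π : Fin n ≃ Fin n) :
    mLogA (bandGraph n b) (fun i => (i : ℕ)) ≤
      mLogA (bandGraph n b) (fun i => (π i : ℕ)) := by
  let logDist (p : Fin n × Fin n) : ℝ := Real.logb 2 (1 + |(p.2 : ℝ) - p.1|)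
  have logb_one_add_mono {x y : ℝ} (hx : 0 ≤ x) (hxy : x ≤ y) :
      Real.logb 2 (1 + x) ≤ Real.logb 2 (1 + y) :=
    Real.logb_le_logb_of_le one_lt_two (by positivity) (by linarith)
  set A : Finset (Fin n × Fin n) := {p | (bandGraph n b).Adj p.1 p.2}
  set πA := A.map (π.prodCongr π).toEmbedding
  unfold mLogA
  refine div_le_div_of_nonneg_right ?_ (by positivity)
  simp only [SimpleGraph.sum_sum_neighborFinset_eq_sum_adj]
  change ∑ p ∈ A, logDist p ≤ ∑ p ∈ A, logDist (π p.1, π p.2)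
  rw [show ∑ p ∈ A, logDist (π p.1, π p.2) = ∑ q ∈ πA, logDist q by rw [sum_map]; rfl]
  refine sum_le_sum_of_card_eq_of_threshold (Real.logb 2 (1 + b)) (card_map _).symm ?_ ?_
  · intro p hp
    have hnear := (bandGraph_adj_iff.mp (mem_filter.mp (mem_sdiff.mp hp).1).2).2
    exact logb_one_add_mono (abs_nonneg _) (by rwa [abs_sub_comm])
  · intro q hq
    obtain ⟨hqπA, hqA⟩ := mem_sdiff.mp hq
    obtain ⟨p, hp, rfl⟩ := mem_map.mp hqπA
    have hne : π p.1 ≠ π p.2 := π.injective.ne (bandGraph_adj_iff.mp (mem_filter.mp hp).2).1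
    have hfar : (b : ℝ) < |(π p.1 : ℝ) - π p.2| := by
      by_contra! hnear
      exact hqA (mem_filter.mpr ⟨mem_univ _, bandGraph_adj_iff.mpr ⟨hne, hnear⟩⟩)
    exact logb_one_add_mono b.cast_nonneg (by rw [abs_sub_comm]; exact hfar.le)

theorem stmt13 (n b : ℕ) (hb : 1 ≤ b) (hn : 2 * b < n) (π : Fin n ≃ Fin n) :
    mLogA (bandGraph n b) (fun i => (i : ℕ)) ≤
      mLogA (bandGraph n b) (fun i => (π i : ℕ)) :=
  stmt13_general n b π
end
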